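/- arXiv:2605.17485 — 2 statements merged into one kernel-verified Lean document; each statement's English description precedes it below -/
import Mathlib

section
/- Let f₀ ∈ ℝ² and write c(θ) = (C⁻¹)_{rrrr}(θ). For every measurable Σ : (α, β) → ℝ with ∫_α^β c(θ) Σ(θ)² dθ < ∞ and satisfying the force constraint ∫_α^β Σ(θ) e_r(θ) dθ = f₀, one has ∫_α^β ½ c(θ) Σ(θ)² dθ ≥ ½ f₀·K_Fl⁻¹ f₀, with equality if and only if Σ(θ) = (K_Fl⁻¹ f₀)·e_r(θ) / c(θ) for a.e. θ ∈ (α, β). In particular, the constrained minimum equals Q*_Fl(f₀) = ½ f₀·K_Fl⁻¹ f₀ and is attained at a unique (up to a.e. equality) minimizer; this minimizer is the angular profile of the Flamant stress. -/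
open Matrix MeasureTheory Set
open scoped ENNReal

noncomputable section

abbrev M2 := Matrix (Fin 2) (Fin 2) ℝ
abbrev V2 := Fin 2 → ℝ

def er (θ : ℝ) : V2 := ![Real.cos θ, Real.sin θ]

def et (θ : ℝ) : V2 := ![-Real.sin θ, Real.cos θ]

/-- Frobenius inner product `⟨A, B⟩ = tr(AᵀB)`. -/
def fip (A B : M2) : ℝ := ∑ i, ∑ j, A i j * B i j

def sym2 (A : M2) : M2 := (1 / 2 : ℝ) • (A + A.transpose)

/-- Symmetrized outer product `a ⊙ b`. -/
def odot (a b : V2) : M2 := (1 / 2 : ℝ) • (vecMulVec a b + vecMulVec b a)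

def IsSym (A : M2) : Prop := A.transpose = A

/-- The quadratic form `Q(F) = ½⟨sym F, C(sym F)⟩`. -/
def Qe (Cm : M2 →ₗ[ℝ] M2) (F : M2) : ℝ := (1 / 2) * fip (sym2 F) (Cm (sym2 F))

/-- `(C⁻¹)_{rrrr}(θ)`. -/
def cRRRR (Ci : M2 →ₗ[ℝ] M2) (θ : ℝ) : ℝ :=
  fip (vecMulVec (er θ) (er θ)) (Ci (vecMulVec (er θ) (er θ)))

/-- `(C⁻¹)_{rθrr}(θ)`. -/
def cRTRR (Ci : M2 →ₗ[ℝ] M2) (θ : ℝ) : ℝ :=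
  fip (odot (er θ) (et θ)) (Ci (vecMulVec (er θ) (er θ)))

/-- `(C⁻¹)_{θθrr}(θ)`. -/
def cTTRR (Ci : M2 →ₗ[ℝ] M2) (θ : ℝ) : ℝ :=
  fip (vecMulVec (et θ) (et θ)) (Ci (vecMulVec (er θ) (er θ)))

/-- The Flamant stiffness matrix `K_Fl`. -/
def KFl (α β : ℝ) (Ci : M2 →ₗ[ℝ] M2) : M2 :=
  Matrix.of fun i j => ∫ θ in Set.Ioo α β, er θ i * er θ j / cRRRR Ci θ

/-- The Flamant quadratic form `Q_Fl(u) = ½ u·K_Fl u`. -/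
def QFl (α β : ℝ) (Ci : M2 →ₗ[ℝ] M2) (u : V2) : ℝ := (1 / 2) * (u ⬝ᵥ (KFl α β Ci).mulVec u)

/-- The dual Flamant quadratic form `Q*_Fl(f) = ½ f·K_Fl⁻¹ f`. -/
def QstarFl (α β : ℝ) (Ci : M2 →ₗ[ℝ] M2) (f : V2) : ℝ :=
  (1 / 2) * (f ⬝ᵥ ((KFl α β Ci)⁻¹).mulVec f)

/-- The matrix `M(θ)` giving the optimal angular profile. -/
def Mmat (Ci : M2 →ₗ[ℝ] M2) (θ : ℝ) : M2 :=
  (2 * cRTRR Ci θ / cRRRR Ci θ) • vecMulVec (er θ) (er θ)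
    - vecMulVec (er θ) (et θ)
    + (cTTRR Ci θ / cRRRR Ci θ) • vecMulVec (et θ) (er θ)

lemma fip_comm (A B : M2) : fip A B = fip B A := by
  unfold fip; congr 1; ext i; congr 1; ext j; ring

lemma isSym_vecMulVec (a : V2) : IsSym (vecMulVec a a) := by
  unfold IsSym; ext i j; simp [vecMulVec, mul_comm]

lemma vecMulVec_er_ne_zero (θ : ℝ) : vecMulVec (er θ) (er θ) ≠ 0 := by
  intro h
  have h0 := congrFun (congrFun h 0) 0
  have h1 := congrFun (congrFun h 1) 1
  simp [vecMulVec, er] at h0 h1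
  nlinarith [Real.sin_sq_add_cos_sq θ]

lemma continuous_er : Continuous er := by
  unfold er
  refine continuous_pi fun i => ?_
  fin_cases i <;> simp <;> continuity

lemma continuous_vecMulVec_er : Continuous (fun θ => vecMulVec (er θ) (er θ) : ℝ → M2) := by
  apply continuous_matrix
  intro i j
  simp only [vecMulVec_apply]
  exact ((continuous_apply i).comp continuous_er).mul ((continuous_apply j).comp continuous_er)

lemma continuous_cRRRR (Ci : M2 →ₗ[ℝ] M2) : Continuous (cRRRR Ci) := by
  unfold cRRRR fip
  have hC : Continuous (fun θ => Ci (vecMulVec (er θ) (er θ))) :=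
    Ci.continuous_of_finiteDimensional.comp continuous_vecMulVec_er
  refine continuous_finset_sum _ fun i _ => continuous_finset_sum _ fun j _ => ?_
  exact (((continuous_apply j).comp ((continuous_apply i).comp continuous_vecMulVec_er))).mul
    (((continuous_apply j).comp ((continuous_apply i).comp hC)))

lemma cRRRR_pos (Cm Ci : M2 →ₗ[ℝ] M2)
    (hCpos : ∀ A, IsSym A → A ≠ 0 → 0 < fip A (Cm A))
    (hIsym : ∀ A, IsSym A → IsSym (Ci A))
    (hInv2 : ∀ A, IsSym A → Cm (Ci A) = A) (θ : ℝ) : 0 < cRRRR Ci θ := by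
  set E := vecMulVec (er θ) (er θ) with hE
  have hEsym := isSym_vecMulVec (er θ)
  have hEne := vecMulVec_er_ne_zero θ
  have hBsym := hIsym E hEsym
  have hBne : Ci E ≠ 0 := by
    intro h
    apply hEne
    have := hInv2 E hEsym
    rw [h, map_zero] at this
    rw [← hE]
    exact this.symm
  have := hCpos (Ci E) hBsym hBne
  rw [hInv2 E hEsym] at this
  unfold cRRRR
  rw [fip_comm] at this
  exact this

lemma exists_theta_ne (α β : ℝ) (hαβ : α < β) (u : V2) (hu : u ≠ 0) :
    ∃ θ₀ ∈ Set.Ioo α β, u ⬝ᵥ er θ₀ ≠ 0 := by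
  by_contra h
  push_neg at h
  set d := min (β - α) Real.pi with hd
  have hd0 : 0 < d := lt_min (by linarith) Real.pi_pos
  have hdle : d ≤ β - α := min_le_left _ _
  have hdpi : d ≤ Real.pi := min_le_right _ _
  set θ1 := α + d / 3 with hθ1
  set θ2 := α + 2 * d / 3 with hθ2
  have hθ1m : θ1 ∈ Set.Ioo α β := ⟨by rw [hθ1]; linarith, by rw [hθ1]; linarith⟩
  have hθ2m : θ2 ∈ Set.Ioo α β := ⟨by rw [hθ2]; linarith, by rw [hθ2]; linarith⟩
  have e1 := h θ1 hθ1m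
  have e2 := h θ2 hθ2m
  have hsin : 0 < Real.sin (θ2 - θ1) := by
    apply Real.sin_pos_of_pos_of_lt_pi <;> [skip; skip] <;> rw [hθ1, hθ2] <;> ring_nf
    · linarith
    · linarith [Real.pi_pos]
  have hsub : Real.sin (θ2 - θ1) = Real.sin θ2 * Real.cos θ1 - Real.cos θ2 * Real.sin θ1 :=
    Real.sin_sub θ2 θ1
  simp only [dotProduct, er, Fin.sum_univ_two, Matrix.cons_val_zero, Matrix.cons_val_one,
    Matrix.head_cons] at e1 e2
  have key0 : u 0 * Real.sin (θ2 - θ1) = 0 := by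
    rw [hsub]; linear_combination Real.sin θ2 * e1 - Real.sin θ1 * e2
  have key1 : u 1 * Real.sin (θ2 - θ1) = 0 := by
    rw [hsub]; linear_combination Real.cos θ1 * e2 - Real.cos θ2 * e1
  have hu0 : u 0 = 0 := by
    rcases mul_eq_zero.1 key0 with h0 | h0
    · exact h0
    · exact absurd h0 hsin.ne'
  have hu1 : u 1 = 0 := by
    rcases mul_eq_zero.1 key1 with h0 | h0
    · exact h0
    · exact absurd h0 hsin.ne'
  apply hu
  ext i
  fin_cases i
  · exact hu0
  · exact hu1

lemma integrableOn_cont (f : ℝ → ℝ) (hf : Continuous f) (α β : ℝ) :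
    IntegrableOn f (Set.Ioo α β) :=
  (hf.integrableOn_Icc (a := α) (b := β)).mono_set Set.Ioo_subset_Icc_self

lemma continuous_dot_er (u : V2) : Continuous fun θ => u ⬝ᵥ er θ := by
  unfold dotProduct
  exact continuous_finset_sum _ fun i _ => continuous_const.mul
    ((continuous_apply i).comp continuous_er)

lemma quad_KFl (α β : ℝ) (Ci : M2 →ₗ[ℝ] M2) (hc : ∀ θ, 0 < cRRRR Ci θ) (u : V2) :
    u ⬝ᵥ (KFl α β Ci).mulVec u
      = ∫ θ in Set.Ioo α β, (u ⬝ᵥ er θ) ^ 2 / cRRRR Ci θ := by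
  have hcc := continuous_cRRRR Ci
  have hint : ∀ i j : Fin 2, IntegrableOn
      (fun θ => u i * u j * (er θ i * er θ j / cRRRR Ci θ)) (Set.Ioo α β) := by
    intro i j
    apply integrableOn_cont _ _ α β
    exact continuous_const.mul ((((continuous_apply i).comp continuous_er).mul
      ((continuous_apply j).comp continuous_er)).div hcc fun θ => (hc θ).ne')
  have expand : u ⬝ᵥ (KFl α β Ci).mulVec u
      = ∑ i, ∑ j, u i * u j * (∫ θ in Set.Ioo α β, er θ i * er θ j / cRRRR Ci θ) := by
    simp only [dotProduct, mulVec, KFl, Matrix.of_apply, Finset.mul_sum]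
    congr 1; ext i; congr 1; ext j; ring
  rw [expand]
  have step : ∀ i j : Fin 2, u i * u j * (∫ θ in Set.Ioo α β, er θ i * er θ j / cRRRR Ci θ)
      = ∫ θ in Set.Ioo α β, u i * u j * (er θ i * er θ j / cRRRR Ci θ) := by
    intro i j
    exact (MeasureTheory.integral_const_mul _ _).symm
  simp_rw [step]
  have h1 : ∀ i : Fin 2, ∑ j, ∫ θ in Set.Ioo α β, u i * u j * (er θ i * er θ j / cRRRR Ci θ)
      = ∫ θ in Set.Ioo α β, ∑ j, u i * u j * (er θ i * er θ j / cRRRR Ci θ) :=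
    fun i => (MeasureTheory.integral_finset_sum _ fun j _ => hint i j).symm
  simp_rw [h1]
  rw [← MeasureTheory.integral_finset_sum _
    (fun i _ => integrable_finset_sum _ fun j _ => hint i j)]
  have hpt : (fun θ => ∑ i, ∑ j, u i * u j * (er θ i * er θ j / cRRRR Ci θ))
      = fun θ => (u ⬝ᵥ er θ) ^ 2 / cRRRR Ci θ := by
    funext θ
    have h0 : cRRRR Ci θ ≠ 0 := (hc θ).ne'
    simp only [dotProduct, Fin.sum_univ_two]
    field_simp
  rw [hpt]

lemma KFl_posdef (α β : ℝ) (hαβ : α < β) (Ci : M2 →ₗ[ℝ] M2)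
    (hc : ∀ θ, 0 < cRRRR Ci θ) : (KFl α β Ci).PosDef := by
  refine Matrix.posDef_iff_dotProduct_mulVec.mpr ⟨?_, ?_⟩
  · ext i j
    simp only [Matrix.conjTranspose_apply, KFl, Matrix.of_apply, star_trivial]
    congr 1
    funext θ
    ring
  · intro u hu
    have hstar : star u = u := by
      funext i; exact star_trivial _
    rw [hstar, quad_KFl α β Ci hc u]
    obtain ⟨θ₀, hθ₀, hne⟩ := exists_theta_ne α β hαβ u hu
    have hcc := continuous_cRRRR Ci
    have hfi : IntegrableOn (fun θ => (u ⬝ᵥ er θ) ^ 2 / cRRRR Ci θ) (Set.Ioo α β) :=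
      integrableOn_cont _ (((continuous_dot_er u).pow 2).div hcc fun θ => (hc θ).ne') α β
    rw [setIntegral_pos_iff_support_of_nonneg_ae
      (Filter.Eventually.of_forall fun θ => div_nonneg (sq_nonneg _) (hc θ).le) hfi]
    have hopen : IsOpen ({θ : ℝ | u ⬝ᵥ er θ ≠ 0} ∩ Set.Ioo α β) :=
      (isOpen_ne.preimage (continuous_dot_er u)).inter isOpen_Ioo
    obtain ⟨ε, hε, hball⟩ := Metric.isOpen_iff.1 hopen θ₀ ⟨hne, hθ₀⟩
    calc (0 : ℝ≥0∞) < volume (Metric.ball θ₀ ε) := Metric.measure_ball_pos volume θ₀ hε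
      _ ≤ volume (Function.support (fun θ => (u ⬝ᵥ er θ) ^ 2 / cRRRR Ci θ) ∩ Set.Ioo α β) := by
          apply measure_mono
          intro x hx
          obtain ⟨hx1, hx2⟩ := hball hx
          exact ⟨div_ne_zero (pow_ne_zero _ hx1) (hc x).ne', hx2⟩

/-- The angular profile of the Flamant stress is the unique minimizer of
`∫ ½ c(θ) Σ(θ)² dθ` subject to the force constraint `∫ Σ(θ) e_r(θ) dθ = f₀`, and the
constrained minimum equals `Q*_Fl(f₀) = ½ f₀·K_Fl⁻¹ f₀`. -/
theorem flamant_stress_minimizer (α β : ℝ) (hαβ : α < β) (h2π : β - α < 2 * Real.pi)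
    (Cm Ci : M2 →ₗ[ℝ] M2)
    (hCsym : ∀ A, IsSym A → IsSym (Cm A))
    (hCsa : ∀ A B, IsSym A → IsSym B → fip (Cm A) B = fip A (Cm B))
    (hCpos : ∀ A, IsSym A → A ≠ 0 → 0 < fip A (Cm A))
    (hIsym : ∀ A, IsSym A → IsSym (Ci A))
    (hInv1 : ∀ A, IsSym A → Ci (Cm A) = A)
    (hInv2 : ∀ A, IsSym A → Cm (Ci A) = A)
    (f₀ : V2) (σ : ℝ → ℝ) (hσ : Measurable σ)
    (hfin : (∫⁻ θ in Set.Ioo α β, ENNReal.ofReal (cRRRR Ci θ * σ θ ^ 2)) ≠ ⊤)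
    (hforce : (∫ θ in Set.Ioo α β, σ θ • er θ) = f₀) :
    QstarFl α β Ci f₀ ≤ (∫ θ in Set.Ioo α β, (1 / 2) * cRRRR Ci θ * σ θ ^ 2) ∧
    ((∫ θ in Set.Ioo α β, (1 / 2) * cRRRR Ci θ * σ θ ^ 2) = QstarFl α β Ci f₀ ↔
      ∀ᵐ θ ∂(volume.restrict (Set.Ioo α β)),
        σ θ = (((KFl α β Ci)⁻¹.mulVec f₀) ⬝ᵥ er θ) / cRRRR Ci θ) := by
  have hc : ∀ θ, 0 < cRRRR Ci θ := cRRRR_pos Cm Ci hCpos hIsym hInv2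
  have hcc := continuous_cRRRR Ci
  have hpd := KFl_posdef α β hαβ Ci hc
  have hdet : IsUnit (KFl α β Ci).det := hpd.det_pos.ne'.isUnit
  set K := KFl α β Ci with hKdef
  set g := K⁻¹.mulVec f₀ with hgdef
  have hKg : K.mulVec g = f₀ := by
    rw [hgdef, Matrix.mulVec_mulVec, Matrix.mul_nonsing_inv _ hdet, Matrix.one_mulVec]
  obtain ⟨θm, hθmm, hθmin⟩ := isCompact_Icc.exists_isMinOn
    (Set.nonempty_Icc.2 hαβ.le) hcc.continuousOn
  set m := cRRRR Ci θm with hmdef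
  have hm0 : 0 < m := hc θm
  have hmle : ∀ θ ∈ Set.Icc α β, m ≤ cRRRR Ci θ := fun θ hθ => hθmin hθ
  have hmeas_Ioo : MeasurableSet (Set.Ioo α β) := measurableSet_Ioo
  have hvol : volume (Set.Ioo α β) < ⊤ := measure_Ioo_lt_top
  -- integrability of c σ²
  have hInt_cσ2 : IntegrableOn (fun θ => cRRRR Ci θ * σ θ ^ 2) (Set.Ioo α β) := by
    refine ⟨(hcc.measurable.mul (hσ.pow_const 2)).aestronglyMeasurable, ?_⟩
    rw [hasFiniteIntegral_iff_ofReal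
      (Filter.Eventually.of_forall fun θ => mul_nonneg (hc θ).le (sq_nonneg _))]
    exact hfin.lt_top
  have hInt_σ2 : IntegrableOn (fun θ => σ θ ^ 2) (Set.Ioo α β) := by
    refine Integrable.mono' (hInt_cσ2.const_mul (1/m)) (hσ.pow_const 2).aestronglyMeasurable ?_
    filter_upwards [ae_restrict_mem hmeas_Ioo] with θ hθ
    have h1 : m ≤ cRRRR Ci θ := hmle θ (Set.Ioo_subset_Icc_self hθ)
    rw [Real.norm_eq_abs, abs_of_nonneg (sq_nonneg _), one_div, inv_mul_eq_div, le_div_iff₀ hm0]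
    nlinarith [sq_nonneg (σ θ), h1]
  have hconst : IntegrableOn (fun _ : ℝ => (1:ℝ)) (Set.Ioo α β) :=
    integrableOn_const hvol.ne
  have htmp : IntegrableOn (fun θ => (σ θ ^ 2 + 1) / 2) (Set.Ioo α β) :=
    (hInt_σ2.add hconst).div_const 2
  have hInt_σ : IntegrableOn σ (Set.Ioo α β) := by
    refine Integrable.mono' htmp hσ.aestronglyMeasurable ?_
    refine Filter.Eventually.of_forall fun θ => ?_
    rw [Real.norm_eq_abs]
    nlinarith [sq_nonneg (|σ θ| - 1), sq_abs (σ θ)]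
  have hInt_absσ : IntegrableOn (fun θ => |σ θ|) (Set.Ioo α β) := hInt_σ.abs
  -- componentwise force constraint
  have hInt_comp : ∀ i : Fin 2, IntegrableOn (fun θ => σ θ * er θ i) (Set.Ioo α β) := by
    intro i
    refine Integrable.mono' hInt_absσ
      (hσ.mul ((continuous_apply i).comp continuous_er).measurable).aestronglyMeasurable ?_
    refine Filter.Eventually.of_forall fun θ => ?_
    rw [Real.norm_eq_abs, abs_mul]
    have : |er θ i| ≤ 1 := by
      fin_cases i
      · exact Real.abs_cos_le_one θ
      · exact Real.abs_sin_le_one θ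
    nlinarith [abs_nonneg (σ θ), abs_nonneg (er θ i)]
  have hInt_σer : IntegrableOn (fun θ => σ θ • er θ) (Set.Ioo α β) := by
    refine Integrable.mono' hInt_absσ
      (hσ.smul continuous_er.measurable).aestronglyMeasurable ?_
    refine Filter.Eventually.of_forall fun θ => ?_
    rw [norm_smul, Real.norm_eq_abs]
    have h1 : ‖er θ‖ ≤ 1 := by
      rw [pi_norm_le_iff_of_nonneg zero_le_one]
      intro i
      rw [Real.norm_eq_abs]
      fin_cases i
      · exact Real.abs_cos_le_one θ
      · exact Real.abs_sin_le_one θ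
    nlinarith [abs_nonneg (σ θ), norm_nonneg (er θ)]
  have hcomp : ∀ i : Fin 2, (∫ θ in Set.Ioo α β, σ θ * er θ i) = f₀ i := by
    intro i
    have h := (ContinuousLinearMap.proj (R := ℝ) (φ := fun _ : Fin 2 => ℝ) i).integral_comp_comm
      hInt_σer
    rw [hforce] at h
    have h2 : (fun θ => (ContinuousLinearMap.proj (R := ℝ) (φ := fun _ : Fin 2 => ℝ) i)
        (σ θ • er θ)) = fun θ => σ θ * er θ i := by
      funext θ
      simp [ContinuousLinearMap.proj_apply]
    rw [h2] at h
    exact h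
  -- key integral computations
  have hgeσ_eq : (fun θ => (g ⬝ᵥ er θ) * σ θ) = fun θ => ∑ i, g i * (σ θ * er θ i) := by
    funext θ
    simp only [dotProduct, Finset.sum_mul]
    congr 1; ext i; ring
  have hInt_geσ : IntegrableOn (fun θ => (g ⬝ᵥ er θ) * σ θ) (Set.Ioo α β) := by
    rw [hgeσ_eq]
    exact integrable_finset_sum _ fun i _ => (hInt_comp i).const_mul _
  have hdot : (∫ θ in Set.Ioo α β, (g ⬝ᵥ er θ) * σ θ) = g ⬝ᵥ f₀ := by
    rw [hgeσ_eq, MeasureTheory.integral_finset_sum _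
      (fun i _ => (hInt_comp i).const_mul _)]
    simp_rw [MeasureTheory.integral_const_mul, hcomp]
    rfl
  have hInt_s2c : IntegrableOn (fun θ => (g ⬝ᵥ er θ) ^ 2 / cRRRR Ci θ) (Set.Ioo α β) :=
    integrableOn_cont _ (((continuous_dot_er g).pow 2).div hcc fun θ => (hc θ).ne') α β
  have hquadg : (∫ θ in Set.Ioo α β, (g ⬝ᵥ er θ) ^ 2 / cRRRR Ci θ) = g ⬝ᵥ f₀ := by
    rw [← quad_KFl α β Ci hc g, hKg]
  -- the optimal profile and remainder
  set s : ℝ → ℝ := fun θ => (g ⬝ᵥ er θ) / cRRRR Ci θ with hsdef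
  set F : ℝ → ℝ := fun θ => (1 / 2) * cRRRR Ci θ * (σ θ - s θ) ^ 2 with hFdef
  have hFeq : F = fun θ => ((1 / 2) * (cRRRR Ci θ * σ θ ^ 2) - (g ⬝ᵥ er θ) * σ θ)
      + (1 / 2) * ((g ⬝ᵥ er θ) ^ 2 / cRRRR Ci θ) := by
    funext θ
    have h0 : cRRRR Ci θ ≠ 0 := (hc θ).ne'
    rw [hFdef]
    simp only [hsdef]
    field_simp
    ring
  have hInt_F : IntegrableOn F (Set.Ioo α β) := by
    rw [hFeq]
    exact ((hInt_cσ2.const_mul _).sub hInt_geσ).add (hInt_s2c.const_mul _)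
  have hmain : (fun θ => (1 / 2) * cRRRR Ci θ * σ θ ^ 2)
      = fun θ => F θ + ((g ⬝ᵥ er θ) * σ θ - (1 / 2) * ((g ⬝ᵥ er θ) ^ 2 / cRRRR Ci θ)) := by
    funext θ
    have h0 : cRRRR Ci θ ≠ 0 := (hc θ).ne'
    rw [hFdef]
    simp only [hsdef]
    field_simp
    ring
  have hsplit : (∫ θ in Set.Ioo α β, (1 / 2) * cRRRR Ci θ * σ θ ^ 2)
      = (∫ θ in Set.Ioo α β, F θ) + (1 / 2) * (g ⬝ᵥ f₀) := by
    have hint_sub : IntegrableOn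
        (fun θ => (g ⬝ᵥ er θ) * σ θ - (1 / 2) * ((g ⬝ᵥ er θ) ^ 2 / cRRRR Ci θ))
        (Set.Ioo α β) := hInt_geσ.sub (hInt_s2c.const_mul _)
    rw [hmain, MeasureTheory.integral_add hInt_F hint_sub,
      MeasureTheory.integral_sub hInt_geσ (hInt_s2c.const_mul _),
      MeasureTheory.integral_const_mul, hdot, hquadg]
    ring
  have hQ : QstarFl α β Ci f₀ = (1 / 2) * (g ⬝ᵥ f₀) := by
    rw [QstarFl, ← hKdef, ← hgdef, dotProduct_comm]
  have hF0 : 0 ≤ ∫ θ in Set.Ioo α β, F θ :=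
    MeasureTheory.integral_nonneg fun θ => by
      rw [hFdef]
      exact mul_nonneg (mul_nonneg (by norm_num) (hc θ).le) (sq_nonneg _)
  constructor
  · rw [hsplit, hQ]
    linarith
  · rw [hsplit, hQ]
    have hiff : (∫ θ in Set.Ioo α β, F θ) = 0 ↔
        ∀ᵐ θ ∂(volume.restrict (Set.Ioo α β)), σ θ = g ⬝ᵥ er θ / cRRRR Ci θ := by
      rw [MeasureTheory.integral_eq_zero_iff_of_nonneg
        (fun θ => mul_nonneg (mul_nonneg (by norm_num) (hc θ).le) (sq_nonneg _)) hInt_F]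
      constructor
      · intro h
        filter_upwards [h] with θ hθ
        simp only [Pi.zero_apply] at hθ
        have hθ' : (1 : ℝ) / 2 * cRRRR Ci θ * (σ θ - s θ) ^ 2 = 0 := hθ
        have hne : (1 : ℝ) / 2 * cRRRR Ci θ ≠ 0 := mul_ne_zero (by norm_num) (hc θ).ne'
        have h2 : (σ θ - s θ) ^ 2 = 0 := (mul_eq_zero.1 hθ').resolve_left hne
        have h4 : σ θ = s θ :=
          sub_eq_zero.1 ((pow_eq_zero_iff (by norm_num : (2 : ℕ) ≠ 0)).1 h2)
        exact h4
      · intro h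
        filter_upwards [h] with θ hθ
        simp only [Pi.zero_apply]
        show (1 : ℝ) / 2 * cRRRR Ci θ * (σ θ - s θ) ^ 2 = 0
        have h5 : σ θ - s θ = 0 := sub_eq_zero.2 hθ
        rw [h5]
        ring
    constructor
    · intro h
      exact hiff.1 (by linarith)
    · intro h
      have := hiff.2 h
      linarith
end
end

section
/- Let β − α ∈ (0, 2π) and let c : [α, β] → ℝ be continuous with c(θ) > 0 for all θ. Then the 2×2 matrix K = ∫_α^β e_r(θ)⊗e_r(θ) / c(θ) dθ is symmetric and positive definite; that is, v·Kv > 0 for every nonzero v ∈ ℝ². In particular K is invertible. (Applied with c = (C⁻¹)_{rrrr}, this shows the Flamant stiffness matrix K_Fl and the Flamant quadratic forms Q_Fl and Q*_Fl are positive definite.) -/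
open Matrix MeasureTheory Set

noncomputable section

/-- `K = ∫_α^β e_r(θ)⊗e_r(θ) / c(θ) dθ`, entrywise. -/
def Kmat (α β : ℝ) (c : ℝ → ℝ) : M2 :=
  Matrix.of fun i j => ∫ θ in Set.Ioo α β, er θ i * er θ j / c θ

/-!
The quadratic form of `K` is `v ⬝ᵥ K v = ∫_α^β (v ⬝ᵥ e_r(θ))² / c(θ) dθ`, with a nonnegative
continuous integrand. It is positive as soon as `v ⬝ᵥ e_r` does not vanish on all of `[α, β]`,
and it cannot: `v ⬝ᵥ e_r(a) = v ⬝ᵥ e_r(b) = 0` with `sin (b - a) ≠ 0` already forces `v = 0`.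
-/

theorem dotProduct_mulVec_integral_mul_div {ι X : Type*} [Fintype ι] [MeasurableSpace X]
    {μ : Measure X} {u : X → ι → ℝ} {w : X → ℝ}
    (hint : ∀ i j, Integrable (fun x => u x i * u x j / w x) μ) (v : ι → ℝ) :
    v ⬝ᵥ (Matrix.of fun i j => ∫ x, u x i * u x j / w x ∂μ) *ᵥ v
      = ∫ x, (v ⬝ᵥ u x) ^ 2 / w x ∂μ := by
  have hpoint : ∀ x, (v ⬝ᵥ u x) ^ 2 / w x = ∑ i, ∑ j, v i * (u x i * u x j / w x) * v j := by
    intro x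
    simp only [dotProduct, sq, Finset.sum_mul, Finset.mul_sum, div_eq_mul_inv]
    exact Finset.sum_congr rfl fun i _ => Finset.sum_congr rfl fun j _ => by ring
  have hij : ∀ i j, Integrable (fun x => v i * (u x i * u x j / w x) * v j) μ :=
    fun i j => ((hint i j).const_mul (v i)).mul_const (v j)
  calc _ = ∑ i, ∑ j, v i * (∫ x, u x i * u x j / w x ∂μ) * v j := by
        simp only [dotProduct, mulVec, of_apply, Finset.mul_sum, mul_assoc]
    _ = ∫ x, ∑ i, ∑ j, v i * (u x i * u x j / w x) * v j ∂μ := by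
        rw [integral_finsetSum _ fun i _ => integrable_finsetSum _ fun j _ => hij i j]
        refine Finset.sum_congr rfl fun i _ => ?_
        rw [integral_finsetSum _ fun j _ => hij i j]
        simp only [integral_mul_const, integral_const_mul]
    _ = _ := by simp only [hpoint]

theorem eq_zero_of_dotProduct_er_eq_zero {v : V2} {a b : ℝ} (hab : Real.sin (b - a) ≠ 0)
    (ha : v ⬝ᵥ er a = 0) (hb : v ⬝ᵥ er b = 0) : v = 0 := by
  simp only [er, dotProduct, Fin.sum_univ_two, Matrix.cons_val_zero, Matrix.cons_val_one]
    at ha hb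
  have h0 : v 0 * Real.sin (b - a) = 0 := by
    rw [Real.sin_sub]; linear_combination Real.sin b * ha - Real.sin a * hb
  have h1 : v 1 * Real.sin (b - a) = 0 := by
    rw [Real.sin_sub]; linear_combination Real.cos a * hb - Real.cos b * ha
  ext i
  fin_cases i
  · exact (mul_eq_zero.mp h0).resolve_right hab
  · exact (mul_eq_zero.mp h1).resolve_right hab

theorem exists_dotProduct_er_ne_zero {v : V2} (hv : v ≠ 0) {α β : ℝ} (hαβ : α < β) :
    ∃ θ ∈ Icc α β, v ⬝ᵥ er θ ≠ 0 := by
  by_contra! hzero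
  set δ := min (β - α) 1
  have hδ : 0 < δ := lt_min (sub_pos.mpr hαβ) one_pos
  have hsin : Real.sin (α + δ - α) ≠ 0 := by
    rw [add_sub_cancel_left]
    exact (Real.sin_pos_of_pos_of_lt_pi hδ
      ((min_le_right _ _).trans_lt (by linarith [Real.pi_gt_three]))).ne'
  exact hv <| eq_zero_of_dotProduct_er_eq_zero hsin (hzero α ⟨le_rfl, hαβ.le⟩)
    (hzero _ ⟨by linarith, by linarith [min_le_left (β - α) 1]⟩)

theorem continuous_er_apply (i : Fin 2) : Continuous fun θ => er θ i := by
  fin_cases i <;> simp only [er] <;> fun_prop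

theorem integrableOn_er_mul_er_div {α β : ℝ} {c : ℝ → ℝ} (hc : ContinuousOn c (Icc α β))
    (hc0 : ∀ θ ∈ Icc α β, c θ ≠ 0) (i j : Fin 2) :
    IntegrableOn (fun θ => er θ i * er θ j / c θ) (Ioo α β) :=
  (((continuous_er_apply i).mul (continuous_er_apply j)).continuousOn.div hc hc0
    |>.integrableOn_Icc).mono_set Ioo_subset_Icc_self

theorem isHermitian_Kmat (α β : ℝ) (c : ℝ → ℝ) : (Kmat α β c).IsHermitian := by
  ext i j
  simp only [Kmat, conjTranspose_apply, of_apply, star_trivial, mul_comm (er _ i)]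

theorem posDef_Kmat {α β : ℝ} (hαβ : α < β) {c : ℝ → ℝ} (hc : ContinuousOn c (Icc α β))
    (hcpos : ∀ θ ∈ Icc α β, 0 < c θ) : (Kmat α β c).PosDef := by
  refine .of_dotProduct_mulVec_pos (isHermitian_Kmat α β c) fun v hv => ?_
  have hint := integrableOn_er_mul_er_div hc fun θ hθ => (hcpos θ hθ).ne'
  rw [star_trivial, Kmat, dotProduct_mulVec_integral_mul_div hint, ← integral_Ioc_eq_integral_Ioo,
    ← intervalIntegral.integral_of_le hαβ.le]
  obtain ⟨θ₀, hθ₀, hne⟩ := exists_dotProduct_er_ne_zero hv hαβ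
  refine intervalIntegral.integral_pos hαβ ?_
    (fun θ hθ => div_nonneg (sq_nonneg _) (hcpos θ (Ioc_subset_Icc_self hθ)).le)
    ⟨θ₀, hθ₀, div_pos (sq_pos_of_ne_zero hne) (hcpos θ₀ hθ₀)⟩
  refine ((continuous_const.dotProduct ?_).pow 2).continuousOn.div hc fun θ hθ => (hcpos θ hθ).ne'
  exact continuous_pi continuous_er_apply

theorem Kmat_posDef_general (α β : ℝ) (hαβ : α < β)
    (c : ℝ → ℝ) (hc : ContinuousOn c (Set.Icc α β))
    (hcpos : ∀ θ ∈ Set.Icc α β, 0 < c θ) :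
    (Kmat α β c).transpose = Kmat α β c ∧
    (∀ v : V2, v ≠ 0 → 0 < v ⬝ᵥ (Kmat α β c).mulVec v) ∧
    IsUnit (Kmat α β c) := by
  have hK := posDef_Kmat hαβ hc hcpos
  refine ⟨?_, fun v hv => ?_, hK.isUnit⟩
  · simpa only [conjTranspose_eq_transpose_of_trivial] using hK.isHermitian.eq
  · simpa only [star_trivial] using hK.dotProduct_mulVec_pos hv

/-- For `β − α ∈ (0, 2π)` and a continuous positive weight `c`, the matrix
`K = ∫_α^β e_r ⊗ e_r / c dθ` is symmetric and positive definite, hence invertible. -/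
theorem Kmat_posDef (α β : ℝ) (hαβ : α < β) (h2π : β - α < 2 * Real.pi)
    (c : ℝ → ℝ) (hc : ContinuousOn c (Set.Icc α β))
    (hcpos : ∀ θ ∈ Set.Icc α β, 0 < c θ) :
    (Kmat α β c).transpose = Kmat α β c ∧
    (∀ v : V2, v ≠ 0 → 0 < v ⬝ᵥ (Kmat α β c).mulVec v) ∧
    IsUnit (Kmat α β c) :=
  Kmat_posDef_general α β hαβ c hc hcpos
end
end
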